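/- arXiv:2602.20107 — 4 statements merged into one kernel-verified Lean document; each statement's English description precedes it below -/
import Mathlib

section
/- Let A be a p×m matrix with entries in the field RatFunc ℂ of rational functions over ℂ, and let r be the rank of A over RatFunc ℂ. Then there exists a finite set S ⊆ ℂ such that for every z ∈ ℂ with z ∉ S, the denominator of every entry of A is nonzero at z and the complex p×m matrix A(z), obtained by evaluating every entry of A at z, has rank exactly r. In particular, rank A(z) equals its maximal value for all but finitely many z ∈ ℂ. -/
/-!
Clearing denominators gives `D • A = B` with `D` a nonzero polynomial and `B` a polynomial matrix.
Over a field the rank is the size of the largest nonvanishing minor, and minors commute with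
ring homomorphisms, so evaluating `B` at `z` never raises the rank, and it preserves the rank
wherever one fixed nonzero minor `q` of maximal size does not vanish. The exceptional set is
the set of roots of `D` and `q`.
-/

open Matrix Polynomial

namespace Matrix

section Minors

variable {K : Type*} [Field K] {m n : Type*} [Fintype n]

theorem exists_linearIndependent_cols_of_le_rank (M : Matrix m n K) {k : ℕ}
    (hk : k ≤ M.rank) : ∃ g : Fin k → n, LinearIndependent K (M.col ∘ g) := by
  obtain ⟨κ, a, ha, hspan, hli⟩ := exists_linearIndependent' K M.col
  have : Fintype κ := Fintype.ofInjective a ha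
  have hκ : k ≤ Fintype.card κ := by
    rwa [rank_eq_finrank_span_cols, ← hspan, finrank_span_eq_card hli] at hk
  let e : Fin k ↪ κ := (Fin.castLEEmb hκ).trans (Fintype.equivFin κ).symm.toEmbedding
  exact ⟨a ∘ e, hli.comp e e.injective⟩

theorem exists_submatrix_det_ne_zero_of_le_rank [Fintype m] (M : Matrix m n K) {k : ℕ}
    (hk : k ≤ M.rank) : ∃ (f : Fin k → m) (g : Fin k → n), (M.submatrix f g).det ≠ 0 := by
  classical
  obtain ⟨g, hg⟩ := M.exists_linearIndependent_cols_of_le_rank hk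
  have hrank : (M.submatrix id g)ᵀ.rank = k := by
    rw [LinearIndependent.rank_matrix (M := (M.submatrix id g)ᵀ) hg, Fintype.card_fin]
  obtain ⟨f, hf⟩ := (M.submatrix id g)ᵀ.exists_linearIndependent_cols_of_le_rank hrank.ge
  have hunit : IsUnit (M.submatrix f g) := linearIndependent_rows_iff_isUnit.mp hf
  exact ⟨f, g, ((isUnit_iff_isUnit_det _).mp hunit).ne_zero⟩

end Minors

theorem le_rank_of_submatrix_det_ne_zero {R : Type*} [CommRing R] [IsDomain R] {m n : Type*}
    [Fintype n] (M : Matrix m n R) {k : ℕ} {f : Fin k → m} {g : Fin k → n}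
    (hdet : (M.submatrix f g).det ≠ 0) : k ≤ M.rank := by
  classical
  simpa [rank_of_det_ne_zero hdet] using M.rank_submatrix_le f g

theorem rank_smul_of_ne_zero {R : Type*} [CommRing R] [IsDomain R] {m n : Type*} [Fintype n]
    {c : R} (hc : c ≠ 0) (M : Matrix m n R) : (c • M).rank = M.rank :=
  rank_smul_of_mem_nonZeroDivisors M (mem_nonZeroDivisors_of_ne_zero hc)

section Specialization

variable {R L : Type*} [CommRing R] [Field L] {m n : Type*}

theorem det_submatrix_map {S : Type*} [CommRing S] {k : ℕ} (φ : R →+* S)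
    (M : Matrix m n R) (f : Fin k → m) (g : Fin k → n) :
    ((M.map φ).submatrix f g).det = φ (M.submatrix f g).det :=
  (RingHom.map_det φ _).symm

variable [Fintype m] [Fintype n]

theorem rank_map_le_rank_map_of_injective {K : Type*} [CommRing K] [IsDomain K] {ι : R →+* K}
    (hι : Function.Injective ι) (φ : R →+* L) (M : Matrix m n R) :
    (M.map φ).rank ≤ (M.map ι).rank := by
  classical
  obtain ⟨f, g, hdet⟩ := (M.map φ).exists_submatrix_det_ne_zero_of_le_rank le_rfl
  refine (M.map ι).le_rank_of_submatrix_det_ne_zero (f := f) (g := g) ?_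
  rw [det_submatrix_map] at hdet ⊢
  exact (map_ne_zero_iff ι hι).mpr fun h => hdet (by rw [h, map_zero])

theorem exists_ne_zero_forall_rank_map_eq {K : Type*} [Field K] {ι : R →+* K}
    (hι : Function.Injective ι) (M : Matrix m n R) :
    ∃ q : R, q ≠ 0 ∧
      ∀ φ : R →+* L, φ q ≠ 0 → (M.map φ).rank = (M.map ι).rank := by
  classical
  obtain ⟨f, g, hdet⟩ := (M.map ι).exists_submatrix_det_ne_zero_of_le_rank le_rfl
  rw [det_submatrix_map] at hdet
  refine ⟨(M.submatrix f g).det, fun h => hdet (by rw [h, map_zero]), fun φ hφ => ?_⟩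
  refine le_antisymm (rank_map_le_rank_map_of_injective hι φ M) ?_
  refine (M.map φ).le_rank_of_submatrix_det_ne_zero (f := f) (g := g) ?_
  rwa [det_submatrix_map]

end Specialization

theorem exists_finset_rank_map_evalRingHom_eq {k : Type*} [Field k] {m n : Type*}
    [Fintype m] [Fintype n] (M : Matrix m n k[X]) :
    ∃ S : Finset k, ∀ z ∉ S,
      (M.map (evalRingHom z)).rank = (M.map (algebraMap k[X] (RatFunc k))).rank := by
  classical
  obtain ⟨q, hq, hrank⟩ :=
    M.exists_ne_zero_forall_rank_map_eq (L := k) (RatFunc.algebraMap_injective k)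
  exact ⟨q.roots.toFinset, fun z hz => hrank _ fun h => hz (by simpa [hq] using h)⟩

end Matrix

namespace RatFunc

variable {K : Type*} [Field K]

theorem algebraMap_num_mul_of_eq_denom_mul {x : RatFunc K} {D c : K[X]} (hD : D = x.denom * c) :
    algebraMap K[X] (RatFunc K) (x.num * c) = algebraMap K[X] (RatFunc K) D * x := by
  have hdenom := algebraMap_ne_zero (denom_ne_zero x)
  conv_rhs => rw [← num_div_denom x]
  rw [hD, map_mul, map_mul]
  field_simp

theorem eval_num_div_eval_denom_of_eq_denom_mul {x : RatFunc K} {D c : K[X]}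
    (hD : D = x.denom * c) {z : K} (hz : Polynomial.eval z D ≠ 0) :
    Polynomial.eval z x.num / Polynomial.eval z x.denom =
      (Polynomial.eval z D)⁻¹ * Polynomial.eval z (x.num * c) := by
  simp only [hD, Polynomial.eval_mul] at hz ⊢
  have hdenom := left_ne_zero_of_mul hz
  have hc := right_ne_zero_of_mul hz
  field_simp

end RatFunc

/-- For a matrix of rational functions over `ℂ` with rank `r` over
`RatFunc ℂ`, all but finitely many points `z ∈ ℂ` avoid all denominator
zeros and give an evaluated matrix of rank exactly `r`. -/
theorem rank_eval_eq_generic_rank_cofinite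
    {p m : ℕ} (A : Matrix (Fin p) (Fin m) (RatFunc ℂ)) (r : ℕ)
    (hr : A.rank = r) :
    ∃ S : Finset ℂ, ∀ z : ℂ, z ∉ S →
      (∀ i j, Polynomial.eval z (A i j).denom ≠ 0) ∧
      (Matrix.rank (fun i j =>
        Polynomial.eval z (A i j).num / Polynomial.eval z (A i j).denom :
          Matrix (Fin p) (Fin m) ℂ) = r) := by
  classical
  let D : ℂ[X] := ∏ q : Fin p × Fin m, (A q.1 q.2).denom
  have hD : D ≠ 0 := Finset.prod_ne_zero_iff.mpr fun q _ => RatFunc.denom_ne_zero _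
  have hdvd : ∀ q : Fin p × Fin m, (A q.1 q.2).denom ∣ D := fun q =>
    Finset.dvd_prod_of_mem _ (Finset.mem_univ q)
  choose c hc using hdvd
  let B : Matrix (Fin p) (Fin m) ℂ[X] := fun i j => (A i j).num * c (i, j)
  have hB : B.map (algebraMap ℂ[X] (RatFunc ℂ)) = algebraMap ℂ[X] (RatFunc ℂ) D • A := by
    ext i j
    exact RatFunc.algebraMap_num_mul_of_eq_denom_mul (hc (i, j))
  obtain ⟨S, hS⟩ := B.exists_finset_rank_map_evalRingHom_eq
  refine ⟨S ∪ D.roots.toFinset, fun z hz => ?_⟩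
  rw [Finset.mem_union, not_or, Multiset.mem_toFinset, mem_roots hD, IsRoot.def] at hz
  have hdenom : ∀ i j, eval z (A i j).denom ≠ 0 := fun i j h =>
    hz.2 (by rw [hc (i, j), eval_mul, h, zero_mul])
  refine ⟨hdenom, ?_⟩
  have hAz : (fun i j => eval z (A i j).num / eval z (A i j).denom : Matrix (Fin p) (Fin m) ℂ) =
      (eval z D)⁻¹ • B.map (evalRingHom z) := by
    ext i j
    exact RatFunc.eval_num_div_eval_denom_of_eq_denom_mul (hc (i, j)) hz.2
  rw [hAz, rank_smul_of_ne_zero (inv_ne_zero hz.2), hS z hz.1, hB,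
    rank_smul_of_ne_zero (RatFunc.algebraMap_ne_zero hD), hr]
end

section
/- Let F be an infinite field, let N, p, m be natural numbers, let A be a p×m matrix whose entries are multivariate polynomials in MvPolynomial (Fin N) F, and let r be the rank of A viewed as a matrix over the fraction field of MvPolynomial (Fin N) F (the generic rank of A). Then there exists a nonzero polynomial g ∈ MvPolynomial (Fin N) F such that for every point x : Fin N → F with g(x) ≠ 0, the matrix A(x) over F obtained by evaluating every entry at x has rank exactly r; moreover rank A(x) ≤ r for every x. Consequently, the set of parameter values where the rank of A drops below its generic rank is contained in the zero set of a nonzero polynomial (a proper affine variety). -/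
open Matrix

section Aux

variable {K : Type*} [Field K]

/-- From a finite family whose span has dimension at least `r`, extract `r`
members forming a linearly independent family. -/
lemma aux_exists_comp_linearIndependent {V ι : Type*} [AddCommGroup V] [Module K V]
    [Fintype ι] (v : ι → V) {r : ℕ}
    (h : r ≤ Module.finrank K (Submodule.span K (Set.range v))) :
    ∃ g : Fin r → ι, LinearIndependent K (v ∘ g) := by
  obtain ⟨b, hbsub, hbspan, hbli⟩ := exists_linearIndependent K (Set.range v)
  have hbfin : b.Finite := (Set.finite_range v).subset hbsub
  haveI : Fintype b := hbfin.fintype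
  have hcard : r ≤ Fintype.card b := by
    have h1 : Module.finrank K (Submodule.span K b) ≤ b.toFinset.card :=
      finrank_span_le_card b
    rw [hbspan] at h1
    simpa [Set.toFinset_card] using le_trans h h1
  let e : Fin r ↪ b :=
    (Fin.castLEEmb hcard).trans (Fintype.equivFin b).symm.toEmbedding
  have hex : ∀ i : Fin r, ∃ j : ι, v j = (e i : V) := fun i => hbsub (e i).2
  choose g hg using hex
  refine ⟨g, ?_⟩
  have : v ∘ g = (fun x : b => (x : V)) ∘ e := funext fun i => hg i
  rw [this]
  exact hbli.comp e e.injective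

/-- Lower bound on rank from a nonvanishing minor. -/
lemma aux_le_rank_of_det_ne_zero {p m r : ℕ} (M : Matrix (Fin p) (Fin m) K)
    (f : Fin r → Fin p) (g : Fin r → Fin m)
    (h : (M.submatrix f g).det ≠ 0) : r ≤ M.rank := by
  have hU : IsUnit (M.submatrix f g) :=
    (Matrix.isUnit_iff_isUnit_det _).2 (isUnit_iff_ne_zero.2 h)
  have hrk : (M.submatrix f g).rank = r := by
    simpa using Matrix.rank_of_isUnit _ hU
  have h1 : ((1 : Matrix (Fin p) (Fin p) K).submatrix f (Equiv.refl (Fin p))) * M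
      = M.submatrix f id := by
    rw [Matrix.one_submatrix_mul]
    rfl
  have h2 : (M.submatrix f id) * ((1 : Matrix (Fin m) (Fin m) K).submatrix
      (Equiv.refl (Fin m)) g) = M.submatrix f g := by
    rw [Matrix.mul_submatrix_one]
    rfl
  calc r = (M.submatrix f g).rank := hrk.symm
    _ = ((M.submatrix f id) * ((1 : Matrix (Fin m) (Fin m) K).submatrix
        (Equiv.refl (Fin m)) g)).rank := by rw [h2]
    _ ≤ (M.submatrix f id).rank := Matrix.rank_mul_le_left _ _
    _ = (((1 : Matrix (Fin p) (Fin p) K).submatrix f (Equiv.refl (Fin p))) * M).rank := by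
        rw [h1]
    _ ≤ M.rank := Matrix.rank_mul_le_right _ _

/-- A matrix of rank at least `r` has a nonvanishing `r × r` minor. -/
lemma aux_exists_submatrix_det_ne_zero {p m : ℕ} (M : Matrix (Fin p) (Fin m) K) {r : ℕ}
    (h : r ≤ M.rank) :
    ∃ (f : Fin r → Fin p) (g : Fin r → Fin m), (M.submatrix f g).det ≠ 0 := by
  rw [Matrix.rank_eq_finrank_span_cols] at h
  obtain ⟨g, hg⟩ := aux_exists_comp_linearIndependent (fun j => Mᵀ j) h
  set B : Matrix (Fin p) (Fin r) K := M.submatrix id g with hB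
  have hBT : (fun j => Bᵀ j) = (fun j => Mᵀ j) ∘ g := rfl
  have hBrank : r ≤ Bᵀ.rank := by
    rw [Matrix.rank_transpose, Matrix.rank_eq_finrank_span_cols]
    have : Module.finrank K (Submodule.span K (Set.range (fun j => Bᵀ j))) = r := by
      rw [hBT]
      simpa using finrank_span_eq_card hg
    exact this.ge
  rw [Matrix.rank_eq_finrank_span_cols] at hBrank
  obtain ⟨f, hf⟩ := aux_exists_comp_linearIndependent (fun i => Bᵀᵀ i) hBrank
  refine ⟨f, g, ?_⟩
  have hrows : LinearIndependent K (fun i => (M.submatrix f g) i) := hf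
  have hU : IsUnit (M.submatrix f g) :=
    Matrix.linearIndependent_rows_iff_isUnit.1 hrows
  exact ((Matrix.isUnit_iff_isUnit_det _).1 hU).ne_zero

end Aux

/-- For a matrix `A` of multivariate polynomials over an infinite field `F`
with generic rank `r` (its rank over the fraction field), there is a nonzero
polynomial `g` such that evaluation at any point where `g` does not vanish
gives a matrix of rank exactly `r`, and every evaluation has rank at most
`r`. -/
theorem generic_rank_drop_on_proper_variety
    {F : Type*} [Field F] [Infinite F] {N p m : ℕ}
    (A : Matrix (Fin p) (Fin m) (MvPolynomial (Fin N) F)) (r : ℕ)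
    (hr : (A.map (algebraMap (MvPolynomial (Fin N) F)
      (FractionRing (MvPolynomial (Fin N) F)))).rank = r) :
    ∃ g : MvPolynomial (Fin N) F, g ≠ 0 ∧
      (∀ x : Fin N → F, MvPolynomial.eval x g ≠ 0 →
        (A.map (MvPolynomial.eval x)).rank = r) ∧
      (∀ x : Fin N → F, (A.map (MvPolynomial.eval x)).rank ≤ r) := by
  have hinj : Function.Injective (algebraMap (MvPolynomial (Fin N) F)
      (FractionRing (MvPolynomial (Fin N) F))) :=
    IsFractionRing.injective _ _
  -- the upper bound: every evaluation has rank at most r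
  have hub : ∀ x : Fin N → F, (A.map (MvPolynomial.eval x)).rank ≤ r := by
    intro x
    by_contra hlt
    push_neg at hlt
    have hle : r + 1 ≤ (A.map (MvPolynomial.eval x)).rank := hlt
    obtain ⟨f', g', hd⟩ := aux_exists_submatrix_det_ne_zero _ hle
    rw [Matrix.submatrix_map, ← RingHom.mapMatrix_apply, ← RingHom.map_det] at hd
    have hQ0 : (A.submatrix f' g').det ≠ 0 := fun h0 => hd (by rw [h0]; simp)
    have hQK : (((A.map (algebraMap (MvPolynomial (Fin N) F)
        (FractionRing (MvPolynomial (Fin N) F)))).submatrix f' g')).det ≠ 0 := by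
      rw [Matrix.submatrix_map, ← RingHom.mapMatrix_apply, ← RingHom.map_det]
      exact fun h0 => hQ0 (hinj (by simpa using h0))
    have hcontra := aux_le_rank_of_det_ne_zero _ f' g' hQK
    rw [hr] at hcontra
    omega
  -- extract a nonvanishing r × r minor over the fraction field
  obtain ⟨f, g, hd⟩ := aux_exists_submatrix_det_ne_zero _ hr.ge
  rw [Matrix.submatrix_map, ← RingHom.mapMatrix_apply, ← RingHom.map_det] at hd
  refine ⟨(A.submatrix f g).det, ?_, ?_, hub⟩
  · exact fun h0 => hd (by rw [h0]; simp)
  · intro x hx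
    refine le_antisymm (hub x) ?_
    apply aux_le_rank_of_det_ne_zero (A.map (MvPolynomial.eval x)) f g
    rw [Matrix.submatrix_map, ← RingHom.mapMatrix_apply, ← RingHom.map_det]
    exact hx
end

section
/- Let F be an infinite field, let A be a p×m matrix whose entries are multivariate polynomials in MvPolynomial (Fin N) F, and let r be the rank of A over the fraction field of MvPolynomial (Fin N) F. Then r equals the maximum, over all points x : Fin N → F, of the rank of the evaluated matrix A(x) over F; that is, the generic rank of A is attained by some evaluation and bounds all evaluations. -/
open Matrix

/-!
Over a field, the rank is the largest size of a nonvanishing minor, and minors commute with ring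
homomorphisms. A minor of `A` that vanishes in the fraction field is the zero polynomial, so it
vanishes at every point: this bounds the ranks of all evaluations. Conversely, a nonzero `r × r`
minor is a nonzero polynomial, which does not vanish at some point of `F^N` because `F` is
infinite.
-/

namespace Matrix

variable {K : Type*} [Field K] {m n : Type*} [Fintype n]

theorem exists_linearIndependent_cols_of_le_rank_s11 {A : Matrix m n K} {s : ℕ}
    (h : s ≤ A.rank) : ∃ g : Fin s → n, LinearIndependent K (A.col ∘ g) := by
  obtain ⟨κ, a, ha, hspan, hli⟩ := exists_linearIndependent' K A.col
  have : Fintype κ := Fintype.ofInjective a ha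
  have hcard : Fintype.card κ = A.rank := by
    rw [rank_eq_finrank_span_cols, ← hspan, finrank_span_eq_card hli]
  obtain ⟨e⟩ : Nonempty (Fin s ↪ κ) :=
    Function.Embedding.nonempty_of_card_le (by rwa [Fintype.card_fin, hcard])
  exact ⟨a ∘ e, hli.comp e e.injective⟩

theorem le_rank_iff_exists_det_submatrix_ne_zero [Fintype m] {A : Matrix m n K} {s : ℕ} :
    s ≤ A.rank ↔ ∃ (f : Fin s → m) (g : Fin s → n), (A.submatrix f g).det ≠ 0 := by
  constructor
  · intro h
    obtain ⟨g, hg⟩ := exists_linearIndependent_cols_of_le_rank_s11 h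
    have hrank : s ≤ (A.submatrix id g)ᵀ.rank := by
      rw [rank_transpose, rank_eq_finrank_span_cols]
      change s ≤ Module.finrank K (Submodule.span K (Set.range (A.col ∘ g)))
      rw [finrank_span_eq_card hg, Fintype.card_fin]
    obtain ⟨f, hf⟩ := exists_linearIndependent_cols_of_le_rank_s11 hrank
    exact ⟨f, g, ((isUnit_iff_isUnit_det _).1 (linearIndependent_rows_iff_isUnit.1 hf)).ne_zero⟩
  · rintro ⟨f, g, hdet⟩
    calc s = (A.submatrix f g).rank := by
          rw [rank_of_isUnit _ ((isUnit_iff_isUnit_det _).2 hdet.isUnit), Fintype.card_fin]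
      _ ≤ A.rank := rank_submatrix_le A f g

theorem le_rank_map_iff_exists_det_submatrix_ne_zero [Fintype m] {R : Type*} [CommRing R]
    (φ : R →+* K) {A : Matrix m n R} {s : ℕ} :
    s ≤ (A.map φ).rank ↔
      ∃ (f : Fin s → m) (g : Fin s → n), φ (A.submatrix f g).det ≠ 0 := by
  simp only [le_rank_iff_exists_det_submatrix_ne_zero, submatrix_map, RingHom.map_det]
  rfl

theorem rank_map_le_rank_map_of_ker_le [Fintype m] {R L : Type*} [CommRing R] [Field L]
    (φ : R →+* K) (ψ : R →+* L) (h : RingHom.ker φ ≤ RingHom.ker ψ) (A : Matrix m n R) :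
    (A.map ψ).rank ≤ (A.map φ).rank := by
  obtain ⟨f, g, hdet⟩ :=
    (le_rank_map_iff_exists_det_submatrix_ne_zero ψ (s := (A.map ψ).rank)).1 le_rfl
  exact (le_rank_map_iff_exists_det_submatrix_ne_zero φ).2 ⟨f, g, fun h0 => hdet (h h0)⟩

end Matrix

theorem MvPolynomial.exists_eval_ne_zero {R σ : Type*} [CommRing R] [IsDomain R] [Infinite R]
    {p : MvPolynomial σ R} (hp : p ≠ 0) : ∃ x : σ → R, eval x p ≠ 0 := by
  by_contra! h
  exact hp (funext fun x => by rw [h x, map_zero])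

/-- The generic rank of a polynomial matrix over an infinite field, i.e. its
rank over the fraction field, is attained by some evaluation and bounds the
rank of every evaluation: `r = max_x rank A(x)`. -/
theorem generic_rank_eq_max_rank_eval
    {F : Type*} [Field F] [Infinite F] {N p m : ℕ}
    (A : Matrix (Fin p) (Fin m) (MvPolynomial (Fin N) F)) (r : ℕ)
    (hr : (A.map (algebraMap (MvPolynomial (Fin N) F)
      (FractionRing (MvPolynomial (Fin N) F)))).rank = r) :
    (∃ x : Fin N → F, (A.map (MvPolynomial.eval x)).rank = r) ∧
    (∀ x : Fin N → F, (A.map (MvPolynomial.eval x)).rank ≤ r) := by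
  have hker : RingHom.ker (algebraMap (MvPolynomial (Fin N) F)
      (FractionRing (MvPolynomial (Fin N) F))) = ⊥ :=
    (RingHom.injective_iff_ker_eq_bot _).1 (IsFractionRing.injective _ _)
  have bound (x : Fin N → F) : (A.map (MvPolynomial.eval x)).rank ≤ r :=
    hr ▸ rank_map_le_rank_map_of_ker_le _ _ (hker ▸ bot_le) A
  refine ⟨?_, bound⟩
  obtain ⟨f, g, hdet⟩ := (le_rank_map_iff_exists_det_submatrix_ne_zero _).1 hr.ge
  obtain ⟨x, hx⟩ := MvPolynomial.exists_eval_ne_zero (ne_zero_of_map hdet)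
  exact ⟨x, (bound x).antisymm
    ((le_rank_map_iff_exists_det_submatrix_ne_zero _).2 ⟨f, g, hx⟩)⟩
end

section
/- Let K be a field and let G₁, G₂ ∈ K with G₁ ≠ 0, G₂ ≠ 0, and G₁·G₂ ≠ 1. Define f(a, b) = (a/(1 − a·b), b/(1 − a·b)) for a, b ∈ K with a·b ≠ 1. Then the pair (−1/G₂, −1/G₁) satisfies (−1/G₂)·(−1/G₁) ≠ 1 and f(−1/G₂, −1/G₁) = f(G₁, G₂); moreover, if in addition G₁·G₂ ≠ −1, then (−1/G₂, −1/G₁) ≠ (G₁, G₂), so f is not injective and the pair (G₁, G₂) cannot be uniquely recovered from the closed-loop transfer functions (G₁/(1 − G₁G₂), G₂/(1 − G₁G₂)). -/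
/-!
The substitution `(a, b) ↦ (-1/b, -1/a)` leaves both closed-loop transfer functions unchanged:
multiplying numerator and denominator of `a / (1 - a b)` by `-1/(a b)` turns it into
`(-1/b) / (1 - 1/(a b))`, and `1/(a b)` is exactly the loop gain `(-1/b)(-1/a)` of the new pair.
The new pair coincides with the old one only when `a b = -1`.
-/

section TwoNodeLoop

variable {K : Type*} [Field K]

theorem neg_one_div_mul_neg_one_div (a b : K) : (-1 / b) * (-1 / a) = (a * b)⁻¹ := by
  ring

theorem neg_one_div_div_one_sub_mul_neg_one_div {a b : K} (ha : a ≠ 0) (hb : b ≠ 0) :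
    (-1 / b) / (1 - (-1 / b) * (-1 / a)) = a / (1 - a * b) := by
  have hab : a * b ≠ 0 := mul_ne_zero ha hb
  calc (-1 / b) / (1 - (-1 / b) * (-1 / a))
      = (-1 / b) / ((a * b)⁻¹ * (a * b - 1)) := by
        rw [neg_one_div_mul_neg_one_div, mul_sub, inv_mul_cancel₀ hab, mul_one]
    _ = ((-1 / b) / (a * b)⁻¹) / (a * b - 1) := div_mul_eq_div_div _ _ _
    _ = -a / (a * b - 1) := by
        congr 1
        field_simp
    _ = a / (1 - a * b) := by rw [← neg_div_neg_eq, neg_neg, neg_sub]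

end TwoNodeLoop

/-- Two-node feedback loop: the pair `(-1/G₂, -1/G₁)` yields the same
closed-loop transfer functions `(a/(1 - a·b), b/(1 - a·b))` as `(G₁, G₂)`,
and differs from `(G₁, G₂)` when `G₁·G₂ ≠ -1`; hence the open-loop transfer
functions are not globally identifiable from the closed-loop ones. -/
theorem two_node_loop_not_globally_identifiable
    {K : Type*} [Field K] (G₁ G₂ : K)
    (hG₁ : G₁ ≠ 0) (hG₂ : G₂ ≠ 0) (h : G₁ * G₂ ≠ 1) :
    (-1 / G₂) * (-1 / G₁) ≠ 1 ∧
    (-1 / G₂) / (1 - (-1 / G₂) * (-1 / G₁)) = G₁ / (1 - G₁ * G₂) ∧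
    (-1 / G₁) / (1 - (-1 / G₂) * (-1 / G₁)) = G₂ / (1 - G₁ * G₂) ∧
    (G₁ * G₂ ≠ -1 → (-1 / G₂, -1 / G₁) ≠ (G₁, G₂)) := by
  refine ⟨?_, neg_one_div_div_one_sub_mul_neg_one_div hG₁ hG₂, ?_, ?_⟩
  · rwa [neg_one_div_mul_neg_one_div, Ne, inv_eq_one]
  · rw [mul_comm (-1 / G₂), mul_comm G₁]
    exact neg_one_div_div_one_sub_mul_neg_one_div hG₂ hG₁
  · intro h_ne h_eq
    exact h_ne ((div_eq_iff hG₂).1 (congrArg Prod.fst h_eq)).symm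
end
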